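/- arXiv:0908.2729 — 9 statements merged into one kernel-verified Lean document; each statement's English description precedes it below -/
import Mathlib

section
/- Let V be a real vector space of dimension at least 2. There is no (ε)-almost paracontact metric structure (φ, ξ, η, g, ε) on V satisfying η(X) g(Y, Z) = η(Y) g(X, Z) for all X, Y, Z ∈ V. Equivalently, if such a structure satisfies this identity, one obtains g(φX, φZ) = 0 for all X, Z ∈ V, contradicting the nondegeneracy of g. -/
/-! Putting `Y = ξ` in the flatness identity shows that every vector of `ker η` is `g`-orthogonal
to all of `V`; nondegeneracy then makes `η : V → ℝ` injective, so `V` has dimension at most `1`. -/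

theorem LinearMap.injective_of_mul_apply_comm {K V : Type*} [Field K] [AddCommGroup V]
    [Module K V] {g : V →ₗ[K] V →ₗ[K] K} (hg : g.SeparatingLeft) {η : V →ₗ[K] K} {ξ : V}
    (hηξ : η ξ ≠ 0) (h : ∀ X Y Z : V, η X * g Y Z = η Y * g X Z) :
    Function.Injective η := by
  refine (injective_iff_map_eq_zero η).2 fun v hv => hg v fun Z => ?_
  have hvZ := h v ξ Z
  rw [hv, zero_mul] at hvZ
  exact (mul_eq_zero.1 hvZ.symm).resolve_left hηξ

theorem stmt_8_general {V : Type*} [AddCommGroup V] [Module ℝ V]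
    (hdim : 2 ≤ Module.rank ℝ V)
    (ξ : V) (η : V →ₗ[ℝ] ℝ)
    (g : V →ₗ[ℝ] V →ₗ[ℝ] ℝ)
    (hηξ : η ξ = 1)
    (hgnd : ∀ X : V, (∀ Y : V, g X Y = 0) → X = 0)
    (hflat : ∀ X Y Z : V, η X * g Y Z = η Y * g X Z) :
    False := by
  have hinj : Function.Injective η :=
    LinearMap.injective_of_mul_apply_comm hgnd (hηξ ▸ one_ne_zero) hflat
  have hrank : Module.rank ℝ V ≤ 1 := by
    simpa using LinearMap.lift_rank_le_of_injective η hinj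
  have : (2 : Cardinal) ≤ 1 := hdim.trans hrank
  norm_num at this

/-- On a real vector space of dimension at least `2`, no `(ε)`-almost paracontact
metric structure can satisfy `η(X) g(Y,Z) = η(Y) g(X,Z)` for all `X, Y, Z`. -/
theorem stmt_8 {V : Type*} [AddCommGroup V] [Module ℝ V]
    (hdim : 2 ≤ Module.rank ℝ V)
    (φ : V →ₗ[ℝ] V) (ξ : V) (η : V →ₗ[ℝ] ℝ)
    (g : V →ₗ[ℝ] V →ₗ[ℝ] ℝ) (ε : ℝ)
    (hφ2 : ∀ X : V, φ (φ X) = X - η X • ξ)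
    (hηξ : η ξ = 1)
    (hφξ : φ ξ = 0)
    (hηφ : ∀ X : V, η (φ X) = 0)
    (hgsym : ∀ X Y : V, g X Y = g Y X)
    (hgnd : ∀ X : V, (∀ Y : V, g X Y = 0) → X = 0)
    (hε : ε = 1 ∨ ε = -1)
    (hgφ : ∀ X Y : V, g (φ X) (φ Y) = g X Y - ε * (η X * η Y))
    (hflat : ∀ X Y Z : V, η X * g Y Z = η Y * g X Z) :
    False :=
  stmt_8_general hdim ξ η g hηξ hgnd hflat
end

section
/- Let (φ, ξ, η, g, ε) be an (ε)-almost paracontact metric structure on a real vector space V with fundamental form Φ(X, Y) = g(X, φY). Let R : V × V × V × V → ℝ be a multilinear map satisfying the pair symmetry R(X, Y, Z, W) = R(Z, W, X, Y) for all arguments and, for all X, Y, Z, W ∈ V, the identity R(X, Y, φZ, φW) − R(X, Y, Z, W) = ε Φ(Y, Z) Φ(X, W) − ε Φ(X, Z) Φ(Y, W) + ε g(φX, φZ) g(φY, φW) − ε g(φY, φZ) g(φX, φW) + η(Z)(η(Y) g(X, W) − η(X) g(Y, W)) − η(W)(η(Y) g(X, Z) − η(X) g(Y, Z)). Then R(X,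 Y, φZ, φW) = R(φX, φY, Z, W) for all X, Y, Z, W ∈ V. -/
/-!
Applying identity (5.15) to `(X, Y, Z, W)` and to `(Z, W, X, Y)` and subtracting, pair symmetry
cancels the terms `R(X, Y, Z, W)`, so the claim holds as soon as the right-hand side of (5.15) is
invariant under exchanging `(X, Y)` with `(Z, W)`. That invariance comes from the symmetry of `g`
and of the fundamental form `Φ`; the latter follows from `g(φX, φY) = g(X, Y) - ε η(X) η(Y)`
applied to `(X, φY)`, since `φ² = id - η ⊗ ξ` and `g(φX, ξ) = ε η(φX) = 0`.
-/

theorem apply_map_map_eq_of_sub_eq_of_pairSymm {V : Type*} (R D : V → V → V → V → ℝ)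
    (φ : V → V) (hpair : ∀ X Y Z W, R X Y Z W = R Z W X Y)
    (hR : ∀ X Y Z W, R X Y (φ Z) (φ W) - R X Y Z W = D X Y Z W)
    (hD : ∀ X Y Z W, D X Y Z W = D Z W X Y) (X Y Z W : V) :
    R X Y (φ Z) (φ W) = R (φ X) (φ Y) Z W := by
  have hXY := hR X Y Z W
  have hZW := hR Z W X Y
  rw [hpair Z W (φ X) (φ Y), hpair Z W X Y, ← hD] at hZW
  linarith

section AlmostParacontactMetric

variable {V : Type*} [AddCommGroup V] [Module ℝ V]
  {φ : V →ₗ[ℝ] V} {ξ : V} {η : V →ₗ[ℝ] ℝ} {g : V →ₗ[ℝ] V →ₗ[ℝ] ℝ} {ε : ℝ}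

theorem metric_apply_reeb (hηξ : η ξ = 1) (hφξ : φ ξ = 0)
    (hgφ : ∀ X Y : V, g (φ X) (φ Y) = g X Y - ε * (η X * η Y)) (X : V) :
    g X ξ = ε * η X := by
  have h := hgφ X ξ
  rw [hφξ, hηξ, map_zero, mul_one] at h
  linarith

theorem metric_apply_map_comm (hφ2 : ∀ X : V, φ (φ X) = X - η X • ξ) (hηξ : η ξ = 1)
    (hφξ : φ ξ = 0) (hηφ : ∀ X : V, η (φ X) = 0)
    (hgφ : ∀ X Y : V, g (φ X) (φ Y) = g X Y - ε * (η X * η Y)) (X Y : V) :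
    g X (φ Y) = g (φ X) Y := by
  have h := hgφ X (φ Y)
  rw [hηφ, mul_zero, mul_zero, sub_zero, hφ2 Y, map_sub, map_smul,
    metric_apply_reeb hηξ hφξ hgφ, hηφ, mul_zero, smul_zero, sub_zero] at h
  exact h.symm

end AlmostParacontactMetric

theorem stmt_9_general {V : Type*} [AddCommGroup V] [Module ℝ V]
    (φ : V →ₗ[ℝ] V) (ξ : V) (η : V →ₗ[ℝ] ℝ)
    (g : V →ₗ[ℝ] V →ₗ[ℝ] ℝ) (ε : ℝ)
    (hφ2 : ∀ X : V, φ (φ X) = X - η X • ξ)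
    (hηξ : η ξ = 1)
    (hφξ : φ ξ = 0)
    (hηφ : ∀ X : V, η (φ X) = 0)
    (hgsym : ∀ X Y : V, g X Y = g Y X)
    (hgφ : ∀ X Y : V, g (φ X) (φ Y) = g X Y - ε * (η X * η Y))
    (Φ : V → V → ℝ) (hΦ : ∀ X Y : V, Φ X Y = g X (φ Y))
    (R : V →ₗ[ℝ] V →ₗ[ℝ] V →ₗ[ℝ] V →ₗ[ℝ] ℝ)
    (hpair : ∀ X Y Z W : V, R X Y Z W = R Z W X Y)
    (hid : ∀ X Y Z W : V,
      R X Y (φ Z) (φ W) - R X Y Z W =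
        ε * Φ Y Z * Φ X W - ε * Φ X Z * Φ Y W
          + ε * g (φ X) (φ Z) * g (φ Y) (φ W) - ε * g (φ Y) (φ Z) * g (φ X) (φ W)
          + η Z * (η Y * g X W - η X * g Y W)
          - η W * (η Y * g X Z - η X * g Y Z)) :
    ∀ X Y Z W : V, R X Y (φ Z) (φ W) = R (φ X) (φ Y) Z W := by
  have hΦsym : ∀ X Y : V, Φ X Y = Φ Y X := fun X Y => by
    rw [hΦ, hΦ, metric_apply_map_comm hφ2 hηξ hφξ hηφ hgφ, hgsym]
  refine apply_map_map_eq_of_sub_eq_of_pairSymm (fun X Y Z W => R X Y Z W) _ φ hpair hid ?_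
  intro X Y Z W
  rw [hΦsym Y Z, hΦsym X W, hΦsym X Z, hΦsym Y W, hgsym (φ X) (φ Z), hgsym (φ Y) (φ W),
    hgsym (φ Y) (φ Z), hgsym (φ X) (φ W), hgsym X W, hgsym Y W, hgsym X Z, hgsym Y Z]
  ring

/-- In an `(ε)`-almost paracontact metric vector space, a multilinear map `R` with pair
symmetry satisfying identity (5.15) also satisfies `R(X,Y,φZ,φW) = R(φX,φY,Z,W)`. -/
theorem stmt_9 {V : Type*} [AddCommGroup V] [Module ℝ V]
    (φ : V →ₗ[ℝ] V) (ξ : V) (η : V →ₗ[ℝ] ℝ)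
    (g : V →ₗ[ℝ] V →ₗ[ℝ] ℝ) (ε : ℝ)
    (hφ2 : ∀ X : V, φ (φ X) = X - η X • ξ)
    (hηξ : η ξ = 1)
    (hφξ : φ ξ = 0)
    (hηφ : ∀ X : V, η (φ X) = 0)
    (hgsym : ∀ X Y : V, g X Y = g Y X)
    (hgnd : ∀ X : V, (∀ Y : V, g X Y = 0) → X = 0)
    (hε : ε = 1 ∨ ε = -1)
    (hgφ : ∀ X Y : V, g (φ X) (φ Y) = g X Y - ε * (η X * η Y))
    (Φ : V → V → ℝ) (hΦ : ∀ X Y : V, Φ X Y = g X (φ Y))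
    (R : V →ₗ[ℝ] V →ₗ[ℝ] V →ₗ[ℝ] V →ₗ[ℝ] ℝ)
    (hpair : ∀ X Y Z W : V, R X Y Z W = R Z W X Y)
    (hid : ∀ X Y Z W : V,
      R X Y (φ Z) (φ W) - R X Y Z W =
        ε * Φ Y Z * Φ X W - ε * Φ X Z * Φ Y W
          + ε * g (φ X) (φ Z) * g (φ Y) (φ W) - ε * g (φ Y) (φ Z) * g (φ X) (φ W)
          + η Z * (η Y * g X W - η X * g Y W)
          - η W * (η Y * g X Z - η X * g Y Z)) :
    ∀ X Y Z W : V, R X Y (φ Z) (φ W) = R (φ X) (φ Y) Z W :=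
  stmt_9_general φ ξ η g ε hφ2 hηξ hφξ hηφ hgsym hgφ Φ hΦ R hpair hid
end

section
/- Let (φ, ξ, η, g, ε) be an (ε)-almost paracontact metric structure on a real vector space V with fundamental form Φ(X, Y) = g(X, φY). Let R : V × V × V × V → ℝ be a multilinear map satisfying, for all X, Y, Z, W ∈ V: (i) R(X, Y, Z, W) = R(Z, W, X, Y); (ii) R(X, Y, Z, W) = −R(X, Y, W, Z); (iii) R(X, Y, Z, ξ) = −η(X) g(Y, Z) + η(Y) g(X, Z); and (iv) R(X, Y, φZ, φW) − R(X, Y, Z, W) = ε Φ(Y, Z) Φ(X, W) − ε Φ(X, Z) Φ(Y, W) + ε g(φX, φZ) g(φY, φW) − ε g(φY, φZ) g(φX, φW) + η(Z)(η(Y) g(X, W) − η(X) g(Y, W)) − η(W)(η(Y) g(X, Z) − η(X) g(Y, Z)). Then for all X, Y, Z, W ∈ V: R(φX, φY, φZ, φW) = R(X, Y, Z, W) + η(Z)(η(Y) g(X, W) − η(X) g(Y, W)) − η(W)(η(Y) g(X, Z) − η(X) g(Y, Z)). -/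
/-!
Apply (5.15) to `(φZ, φW, X, Y)` and use the pair symmetry to turn it into an expression for
`R(φX,φY,φZ,φW) − R(X,Y,φZ,φW)`; adding (5.15) for `(X, Y, Z, W)` gives the claim as soon as the
`ε`-terms of the two instances cancel. Since `η ∘ φ = 0` the first instance has no `η`-terms, and
its `ε`-terms are those of the second with opposite signs because `φ` is `g`-symmetric, so that
`g(A, φB)` is symmetric in `A, B`, and `g(φ²A, φB) = g(A, φB)`.
-/

section ParacontactMetric

variable {V : Type*} [AddCommGroup V] [Module ℝ V] {φ : V →ₗ[ℝ] V} {ξ : V} {η : V →ₗ[ℝ] ℝ}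
  {g : V →ₗ[ℝ] V →ₗ[ℝ] ℝ} {ε : ℝ}

lemma g_xi_apply (hηξ : η ξ = 1) (hφξ : φ ξ = 0)
    (hgφ : ∀ X Y : V, g (φ X) (φ Y) = g X Y - ε * (η X * η Y)) (A : V) :
    g ξ A = ε * η A := by
  have h := hgφ ξ A
  simp only [hφξ, map_zero, LinearMap.zero_apply, hηξ, one_mul] at h
  linarith

lemma g_phi_apply_eq_apply_phi (hφ2 : ∀ X : V, φ (φ X) = X - η X • ξ) (hηξ : η ξ = 1)
    (hφξ : φ ξ = 0) (hηφ : ∀ X : V, η (φ X) = 0) (hgsym : ∀ X Y : V, g X Y = g Y X)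
    (hgφ : ∀ X Y : V, g (φ X) (φ Y) = g X Y - ε * (η X * η Y)) (A B : V) :
    g (φ A) B = g A (φ B) := by
  have hB : B = φ (φ B) + η B • ξ := by rw [hφ2]; abel
  have hφA_ξ : g (φ A) ξ = 0 := by rw [hgsym, g_xi_apply hηξ hφξ hgφ, hηφ, mul_zero]
  calc g (φ A) B = g (φ A) (φ (φ B)) + η B * g (φ A) ξ := by
        conv_lhs => rw [hB]
        simp only [map_add, map_smul, smul_eq_mul]
    _ = g A (φ B) := by rw [hgφ, hφA_ξ, hηφ]; ring

lemma g_apply_phi_comm (hφ2 : ∀ X : V, φ (φ X) = X - η X • ξ) (hηξ : η ξ = 1)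
    (hφξ : φ ξ = 0) (hηφ : ∀ X : V, η (φ X) = 0) (hgsym : ∀ X Y : V, g X Y = g Y X)
    (hgφ : ∀ X Y : V, g (φ X) (φ Y) = g X Y - ε * (η X * η Y)) (A B : V) :
    g A (φ B) = g B (φ A) := by
  rw [← g_phi_apply_eq_apply_phi hφ2 hηξ hφξ hηφ hgsym hgφ, hgsym]

lemma g_phi_phi_apply_phi (hφ2 : ∀ X : V, φ (φ X) = X - η X • ξ) (hηξ : η ξ = 1)
    (hφξ : φ ξ = 0) (hηφ : ∀ X : V, η (φ X) = 0) (hgsym : ∀ X Y : V, g X Y = g Y X)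
    (hgφ : ∀ X Y : V, g (φ X) (φ Y) = g X Y - ε * (η X * η Y)) (A B : V) :
    g (φ (φ A)) (φ B) = g A (φ B) := by
  rw [hgφ, hηφ, zero_mul, mul_zero, sub_zero,
    g_phi_apply_eq_apply_phi hφ2 hηξ hφξ hηφ hgsym hgφ]

end ParacontactMetric

theorem stmt_10_general {V : Type*} [AddCommGroup V] [Module ℝ V]
    (φ : V →ₗ[ℝ] V) (ξ : V) (η : V →ₗ[ℝ] ℝ)
    (g : V →ₗ[ℝ] V →ₗ[ℝ] ℝ) (ε : ℝ)
    (hφ2 : ∀ X : V, φ (φ X) = X - η X • ξ)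
    (hηξ : η ξ = 1)
    (hφξ : φ ξ = 0)
    (hηφ : ∀ X : V, η (φ X) = 0)
    (hgsym : ∀ X Y : V, g X Y = g Y X)
    (hgφ : ∀ X Y : V, g (φ X) (φ Y) = g X Y - ε * (η X * η Y))
    (Φ : V → V → ℝ) (hΦ : ∀ X Y : V, Φ X Y = g X (φ Y))
    (R : V →ₗ[ℝ] V →ₗ[ℝ] V →ₗ[ℝ] V →ₗ[ℝ] ℝ)
    (hpair : ∀ X Y Z W : V, R X Y Z W = R Z W X Y)
    (hid : ∀ X Y Z W : V,
      R X Y (φ Z) (φ W) - R X Y Z W =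
        ε * Φ Y Z * Φ X W - ε * Φ X Z * Φ Y W
          + ε * g (φ X) (φ Z) * g (φ Y) (φ W) - ε * g (φ Y) (φ Z) * g (φ X) (φ W)
          + η Z * (η Y * g X W - η X * g Y W)
          - η W * (η Y * g X Z - η X * g Y Z)) :
    ∀ X Y Z W : V,
      R (φ X) (φ Y) (φ Z) (φ W) =
        R X Y Z W + η Z * (η Y * g X W - η X * g Y W)
          - η W * (η Y * g X Z - η X * g Y Z) := by
  intro X Y Z W
  have hΦcomm := g_apply_phi_comm hφ2 hηξ hφξ hηφ hgsym hgφ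
  have hφφ := g_phi_phi_apply_phi hφ2 hηξ hφξ hηφ hgsym hgφ
  have h₁ := hid (φ Z) (φ W) X Y
  rw [hpair (φ Z) (φ W) (φ X) (φ Y), hpair (φ Z) (φ W) X Y] at h₁
  simp only [hΦ, hηφ, hφφ, zero_mul, sub_zero] at h₁
  rw [hgsym (φ W) (φ X), hgsym (φ Z) (φ Y), hgsym (φ Z) (φ X), hgsym (φ W) (φ Y),
    hΦcomm Z X, hΦcomm W Y, hΦcomm W X, hΦcomm Z Y] at h₁
  have h₂ := hid X Y Z W
  simp only [hΦ] at h₂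
  linear_combination h₁ + h₂

/-- In an `(ε)`-almost paracontact metric vector space, a multilinear map `R` with the
stated symmetries and identities satisfies identity (5.17):
`R(φX,φY,φZ,φW) = R(X,Y,Z,W) + η(Z)(η(Y)g(X,W) − η(X)g(Y,W)) − η(W)(η(Y)g(X,Z) − η(X)g(Y,Z))`. -/
theorem stmt_10 {V : Type*} [AddCommGroup V] [Module ℝ V]
    (φ : V →ₗ[ℝ] V) (ξ : V) (η : V →ₗ[ℝ] ℝ)
    (g : V →ₗ[ℝ] V →ₗ[ℝ] ℝ) (ε : ℝ)
    (hφ2 : ∀ X : V, φ (φ X) = X - η X • ξ)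
    (hηξ : η ξ = 1)
    (hφξ : φ ξ = 0)
    (hηφ : ∀ X : V, η (φ X) = 0)
    (hgsym : ∀ X Y : V, g X Y = g Y X)
    (hgnd : ∀ X : V, (∀ Y : V, g X Y = 0) → X = 0)
    (hε : ε = 1 ∨ ε = -1)
    (hgφ : ∀ X Y : V, g (φ X) (φ Y) = g X Y - ε * (η X * η Y))
    (Φ : V → V → ℝ) (hΦ : ∀ X Y : V, Φ X Y = g X (φ Y))
    (R : V →ₗ[ℝ] V →ₗ[ℝ] V →ₗ[ℝ] V →ₗ[ℝ] ℝ)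
    (hpair : ∀ X Y Z W : V, R X Y Z W = R Z W X Y)
    (hskew : ∀ X Y Z W : V, R X Y Z W = -R X Y W Z)
    (hRξ : ∀ X Y Z : V, R X Y Z ξ = -(η X) * g Y Z + η Y * g X Z)
    (hid : ∀ X Y Z W : V,
      R X Y (φ Z) (φ W) - R X Y Z W =
        ε * Φ Y Z * Φ X W - ε * Φ X Z * Φ Y W
          + ε * g (φ X) (φ Z) * g (φ Y) (φ W) - ε * g (φ Y) (φ Z) * g (φ X) (φ W)
          + η Z * (η Y * g X W - η X * g Y W)
          - η W * (η Y * g X Z - η X * g Y Z)) :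
    ∀ X Y Z W : V,
      R (φ X) (φ Y) (φ Z) (φ W) =
        R X Y Z W + η Z * (η Y * g X W - η X * g Y W)
          - η W * (η Y * g X Z - η X * g Y Z) :=
  stmt_10_general φ ξ η g ε hφ2 hηξ hφξ hηφ hgsym hgφ Φ hΦ R hpair hid
end

section
/- Let (φ, ξ, η, g, ε) be an (ε)-almost paracontact metric structure on a real vector space V. Let R : V × V × V → V be a trilinear map, written R(X, Y)Z, satisfying for all X, Y, Z, U ∈ V: (i) R(ξ, X)Y = −ε g(X, Y) ξ + η(Y) X; (ii) R(X, Y)ξ = η(X) Y − η(Y) X; and (iii) R(ξ, U)(R(X, Y)ξ) − R(X, Y)(R(ξ, U)ξ) − R(R(ξ, U)X, Y)ξ − R(X, R(ξ, U)Y)ξ = 0. Then R(X, Y)W = −ε (g(Y, W) X − g(X, W) Y) for all X, Y, W ∈ V. -/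
/-!
Take the semi-symmetry condition with `U = W` and expand every value of `R` having `ξ` in one
of its slots by (i) and (ii), using (ii) for `R(ξ,W)ξ = W − η(W)ξ`. All terms along `ξ` and
all `η ⊗ η` terms cancel, and what remains is `R(X,Y)W = ε (g(W,X) Y − g(W,Y) X)`.
-/

lemma curvature_eq_of_semisymmetric {V : Type*} [AddCommGroup V] [Module ℝ V]
    (ξ : V) (η : V →ₗ[ℝ] ℝ) (g : V →ₗ[ℝ] V →ₗ[ℝ] ℝ) (ε : ℝ) (hηξ : η ξ = 1)
    (R : V →ₗ[ℝ] V →ₗ[ℝ] V →ₗ[ℝ] V)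
    (hRξX : ∀ X Y : V, R ξ X Y = (-ε * g X Y) • ξ + η Y • X)
    (hRXYξ : ∀ X Y : V, R X Y ξ = η X • Y - η Y • X)
    (hss : ∀ X Y U : V,
      R ξ U (R X Y ξ) - R X Y (R ξ U ξ) - R (R ξ U X) Y ξ - R X (R ξ U Y) ξ = 0)
    (X Y W : V) :
    R X Y W = ε • (g W X • Y - g W Y • X) := by
  have key := hss X Y W
  simp only [hRXYξ, hRξX, map_add, map_sub, map_smul, LinearMap.add_apply,
    LinearMap.smul_apply, hηξ] at key
  linear_combination (norm := module) -key

theorem stmt_12_general {V : Type*} [AddCommGroup V] [Module ℝ V]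
    (ξ : V) (η : V →ₗ[ℝ] ℝ)
    (g : V →ₗ[ℝ] V →ₗ[ℝ] ℝ) (ε : ℝ)
    (hηξ : η ξ = 1)
    (hgsym : ∀ X Y : V, g X Y = g Y X)
    (R : V →ₗ[ℝ] V →ₗ[ℝ] V →ₗ[ℝ] V)
    (hRξX : ∀ X Y : V, R ξ X Y = (-ε * g X Y) • ξ + η Y • X)
    (hRXYξ : ∀ X Y : V, R X Y ξ = η X • Y - η Y • X)
    (hss : ∀ X Y U : V,
      R ξ U (R X Y ξ) - R X Y (R ξ U ξ) - R (R ξ U X) Y ξ - R X (R ξ U Y) ξ = 0) :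
    ∀ X Y W : V, R X Y W = (-ε) • (g Y W • X - g X W • Y) := by
  intro X Y W
  rw [curvature_eq_of_semisymmetric ξ η g ε hηξ R hRξX hRXYξ hss X Y W, hgsym W X, hgsym W Y]
  module

/-- In an `(ε)`-almost paracontact metric vector space, a trilinear map `R(X,Y)Z`
satisfying `R(ξ,X)Y = −ε g(X,Y)ξ + η(Y)X`, `R(X,Y)ξ = η(X)Y − η(Y)X` and the
semi-symmetry condition `(R(ξ,U)·R)(X,Y)ξ = 0` is of constant-curvature form
`R(X,Y)W = −ε (g(Y,W)X − g(X,W)Y)`. -/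
theorem stmt_12 {V : Type*} [AddCommGroup V] [Module ℝ V]
    (φ : V →ₗ[ℝ] V) (ξ : V) (η : V →ₗ[ℝ] ℝ)
    (g : V →ₗ[ℝ] V →ₗ[ℝ] ℝ) (ε : ℝ)
    (hφ2 : ∀ X : V, φ (φ X) = X - η X • ξ)
    (hηξ : η ξ = 1)
    (hφξ : φ ξ = 0)
    (hηφ : ∀ X : V, η (φ X) = 0)
    (hgsym : ∀ X Y : V, g X Y = g Y X)
    (hgnd : ∀ X : V, (∀ Y : V, g X Y = 0) → X = 0)
    (hε : ε = 1 ∨ ε = -1)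
    (hgφ : ∀ X Y : V, g (φ X) (φ Y) = g X Y - ε * (η X * η Y))
    (R : V →ₗ[ℝ] V →ₗ[ℝ] V →ₗ[ℝ] V)
    (hRξX : ∀ X Y : V, R ξ X Y = (-ε * g X Y) • ξ + η Y • X)
    (hRXYξ : ∀ X Y : V, R X Y ξ = η X • Y - η Y • X)
    (hss : ∀ X Y U : V,
      R ξ U (R X Y ξ) - R X Y (R ξ U ξ) - R (R ξ U X) Y ξ - R X (R ξ U Y) ξ = 0) :
    ∀ X Y W : V, R X Y W = (-ε) • (g Y W • X - g X W • Y) :=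
  stmt_12_general ξ η g ε hηξ hgsym R hRξX hRXYξ hss
end

section
/- Let (φ, ξ, η, g, ε) be an (ε)-almost paracontact metric structure on an n-dimensional real vector space V. Let S be a bilinear form on V satisfying S(φY, φZ) = S(Y, Z) + (n − 1) η(Y) η(Z) for all Y, Z ∈ V. Then S(Y, ξ) = −(n − 1) η(Y) for all Y ∈ V, and S(φY, Z) = S(Y, φZ) for all Y, Z ∈ V. -/
/-!
Since `φ ξ = 0` and `η ξ = 1`, putting `ξ` into the invariance identity for `S` leaves
`0 = S(Y,ξ) + (n-1) η(Y)`. Putting `φ Y` in the first slot instead, the correction term dies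
because `η ∘ φ = 0`, and `φ² = id - η ⊗ ξ` turns `S(φ² Y, φ Z)` into `S(Y, φ Z)`, the
`ξ`-component contributing a multiple of `η(φ Z) = 0`.
-/

structure IsAlmostParacontact {R V : Type*} [CommRing R] [AddCommGroup V] [Module R V]
    (φ : V →ₗ[R] V) (ξ : V) (η : V →ₗ[R] R) : Prop where
  phi_phi : ∀ X, φ (φ X) = X - η X • ξ
  eta_xi : η ξ = 1
  phi_xi : φ ξ = 0
  eta_phi : ∀ X, η (φ X) = 0

namespace IsAlmostParacontact

variable {R V : Type*} [CommRing R] [AddCommGroup V] [Module R V]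
  {φ : V →ₗ[R] V} {ξ : V} {η : V →ₗ[R] R} {S : V →ₗ[R] V →ₗ[R] R} {c : R}

theorem bilin_xi_right (h : IsAlmostParacontact φ ξ η)
    (hS : ∀ Y Z, S (φ Y) (φ Z) = S Y Z + c * (η Y * η Z)) (Y : V) :
    S Y ξ = -c * η Y := by
  have := hS Y ξ
  rw [h.phi_xi, h.eta_xi, map_zero, mul_one] at this
  linear_combination -this

theorem bilin_xi_left (h : IsAlmostParacontact φ ξ η)
    (hS : ∀ Y Z, S (φ Y) (φ Z) = S Y Z + c * (η Y * η Z)) (Z : V) :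
    S ξ Z = -c * η Z := by
  have := hS ξ Z
  rw [h.phi_xi, h.eta_xi, map_zero, LinearMap.zero_apply, one_mul] at this
  linear_combination -this

theorem bilin_phi_left_eq_phi_right (h : IsAlmostParacontact φ ξ η)
    (hS : ∀ Y Z, S (φ Y) (φ Z) = S Y Z + c * (η Y * η Z)) (Y Z : V) :
    S (φ Y) Z = S Y (φ Z) := by
  calc S (φ Y) Z = S (φ (φ Y)) (φ Z) := by rw [hS, h.eta_phi, zero_mul, mul_zero, add_zero]
    _ = S Y (φ Z) - η Y * S ξ (φ Z) := by
      rw [h.phi_phi, map_sub, map_smul, LinearMap.sub_apply, LinearMap.smul_apply, smul_eq_mul]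
    _ = S Y (φ Z) := by rw [h.bilin_xi_left hS, h.eta_phi, mul_zero, mul_zero, sub_zero]

end IsAlmostParacontact

theorem stmt_13_general {V : Type*} [AddCommGroup V] [Module ℝ V]
    (n : ℕ)
    (φ : V →ₗ[ℝ] V) (ξ : V) (η : V →ₗ[ℝ] ℝ)
    (hφ2 : ∀ X : V, φ (φ X) = X - η X • ξ)
    (hηξ : η ξ = 1)
    (hφξ : φ ξ = 0)
    (hηφ : ∀ X : V, η (φ X) = 0)
    (S : V →ₗ[ℝ] V →ₗ[ℝ] ℝ)
    (hS : ∀ Y Z : V, S (φ Y) (φ Z) = S Y Z + ((n : ℝ) - 1) * (η Y * η Z)) :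
    (∀ Y : V, S Y ξ = -((n : ℝ) - 1) * η Y) ∧
      ∀ Y Z : V, S (φ Y) Z = S Y (φ Z) := by
  have h : IsAlmostParacontact φ ξ η := ⟨hφ2, hηξ, hφξ, hηφ⟩
  exact ⟨h.bilin_xi_right hS, h.bilin_phi_left_eq_phi_right hS⟩

/-- In an `n`-dimensional `(ε)`-almost paracontact metric vector space, a bilinear form
`S` with `S(φY,φZ) = S(Y,Z) + (n−1)η(Y)η(Z)` satisfies `S(Y,ξ) = −(n−1)η(Y)` and
`S(φY,Z) = S(Y,φZ)`. -/
theorem stmt_13 {V : Type*} [AddCommGroup V] [Module ℝ V] [FiniteDimensional ℝ V]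
    (n : ℕ) (hn : Module.finrank ℝ V = n)
    (φ : V →ₗ[ℝ] V) (ξ : V) (η : V →ₗ[ℝ] ℝ)
    (g : V →ₗ[ℝ] V →ₗ[ℝ] ℝ) (ε : ℝ)
    (hφ2 : ∀ X : V, φ (φ X) = X - η X • ξ)
    (hηξ : η ξ = 1)
    (hφξ : φ ξ = 0)
    (hηφ : ∀ X : V, η (φ X) = 0)
    (hgsym : ∀ X Y : V, g X Y = g Y X)
    (hgnd : ∀ X : V, (∀ Y : V, g X Y = 0) → X = 0)
    (hε : ε = 1 ∨ ε = -1)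
    (hgφ : ∀ X Y : V, g (φ X) (φ Y) = g X Y - ε * (η X * η Y))
    (S : V →ₗ[ℝ] V →ₗ[ℝ] ℝ)
    (hS : ∀ Y Z : V, S (φ Y) (φ Z) = S Y Z + ((n : ℝ) - 1) * (η Y * η Z)) :
    (∀ Y : V, S Y ξ = -((n : ℝ) - 1) * η Y) ∧
      ∀ Y Z : V, S (φ Y) Z = S Y (φ Z) :=
  stmt_13_general n φ ξ η hφ2 hηξ hφξ hηφ S hS
end

section
/- Let (φ, ξ, η, g, ε) be an (ε)-almost paracontact metric structure on an n-dimensional real vector space V with n ≥ 2, and let Φ(X, Y) = g(X, φY). Let S be a bilinear form on V and α a linear functional on V such that S(Y, ξ) = −(n − 1) η(Y) for all Y ∈ V and ε S(φX, Y) + (n − 1) Φ(X, Y) = (n − 1) α(X) η(Y) for all X, Y ∈ V. Then α = 0. -/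
theorem stmt_14_general {V : Type*} [AddCommGroup V] [Module ℝ V]
    (n : ℕ) (hn2 : 2 ≤ n)
    (φ : V →ₗ[ℝ] V) (ξ : V) (η : V →ₗ[ℝ] ℝ)
    (g : V →ₗ[ℝ] V →ₗ[ℝ] ℝ) (ε : ℝ)
    (hηξ : η ξ = 1)
    (hφξ : φ ξ = 0)
    (hηφ : ∀ X : V, η (φ X) = 0)
    (Φ : V → V → ℝ) (hΦ : ∀ X Y : V, Φ X Y = g X (φ Y))
    (S : V →ₗ[ℝ] V →ₗ[ℝ] ℝ) (α : V →ₗ[ℝ] ℝ)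
    (hSξ : ∀ Y : V, S Y ξ = -((n : ℝ) - 1) * η Y)
    (hrec : ∀ X Y : V,
      ε * S (φ X) Y + ((n : ℝ) - 1) * Φ X Y = ((n : ℝ) - 1) * (α X * η Y)) :
    α = 0 := by
  have hn1 : (n : ℝ) - 1 ≠ 0 := by
    have : (2 : ℝ) ≤ n := by exact_mod_cast hn2
    linarith
  ext X
  -- At `Y = ξ` both terms on the left vanish, since `η ∘ φ = 0` and `φ ξ = 0`.
  have hX : ((n : ℝ) - 1) * α X = 0 := by
    simpa [hSξ, hηφ, hΦ, hφξ, hηξ, eq_comm] using hrec X ξ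
  simpa [hn1] using hX

/-- In an `n`-dimensional (`n ≥ 2`) `(ε)`-almost paracontact metric vector space, if a
bilinear form `S` and a linear functional `α` satisfy `S(Y,ξ) = −(n−1)η(Y)` and
`ε S(φX,Y) + (n−1)Φ(X,Y) = (n−1)α(X)η(Y)`, then `α = 0`. -/
theorem stmt_14 {V : Type*} [AddCommGroup V] [Module ℝ V] [FiniteDimensional ℝ V]
    (n : ℕ) (hn : Module.finrank ℝ V = n) (hn2 : 2 ≤ n)
    (φ : V →ₗ[ℝ] V) (ξ : V) (η : V →ₗ[ℝ] ℝ)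
    (g : V →ₗ[ℝ] V →ₗ[ℝ] ℝ) (ε : ℝ)
    (hφ2 : ∀ X : V, φ (φ X) = X - η X • ξ)
    (hηξ : η ξ = 1)
    (hφξ : φ ξ = 0)
    (hηφ : ∀ X : V, η (φ X) = 0)
    (hgsym : ∀ X Y : V, g X Y = g Y X)
    (hgnd : ∀ X : V, (∀ Y : V, g X Y = 0) → X = 0)
    (hε : ε = 1 ∨ ε = -1)
    (hgφ : ∀ X Y : V, g (φ X) (φ Y) = g X Y - ε * (η X * η Y))
    (Φ : V → V → ℝ) (hΦ : ∀ X Y : V, Φ X Y = g X (φ Y))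
    (S : V →ₗ[ℝ] V →ₗ[ℝ] ℝ) (α : V →ₗ[ℝ] ℝ)
    (hSξ : ∀ Y : V, S Y ξ = -((n : ℝ) - 1) * η Y)
    (hrec : ∀ X Y : V,
      ε * S (φ X) Y + ((n : ℝ) - 1) * Φ X Y = ((n : ℝ) - 1) * (α X * η Y)) :
    α = 0 :=
  stmt_14_general n hn2 φ ξ η g ε hηξ hφξ hηφ Φ hΦ S α hSξ hrec
end

section
/- Let (φ, ξ, η, g, ε) be an (ε)-almost paracontact metric structure on an n-dimensional real vector space V, and let Φ(X, Y) = g(X, φY). Let S be a symmetric bilinear form on V such that S(Y, ξ) = −(n − 1) η(Y) for all Y ∈ V and ε S(φX, Y) + (n − 1) Φ(X, Y) = 0 for all X, Y ∈ V. Then S(X, Y) = −ε (n − 1) g(X, Y) for all X, Y ∈ V. -/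
/-!
Apply the second identity to `φX`. Since `φ² = 1 − η ⊗ ξ` and `g(φ·, φ·) = g − ε η ⊗ η`, the
correction terms are `ε η(X) S(ξ, Y)` and `−(n − 1) ε η(X) η(Y)`, which cancel because
`S(ξ, ·) = −(n − 1) η`. What remains is `ε S = −(n − 1) g`, and `ε² = 1`.
-/

section AlmostParacontact

variable {R M : Type*} [CommRing R] [AddCommGroup M] [Module R M]
  {φ : M →ₗ[R] M} {ξ : M} {η : M →ₗ[R] R}

theorem apply_phi_phi_left (hφ2 : ∀ X, φ (φ X) = X - η X • ξ)
    (B : M →ₗ[R] M →ₗ[R] R) (X Y : M) :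
    B (φ (φ X)) Y = B X Y - η X * B ξ Y := by
  simp [hφ2]

theorem mul_apply_eq_neg_mul_of_apply_phi {g S : M →ₗ[R] M →ₗ[R] R} {ε c : R}
    (hφ2 : ∀ X, φ (φ X) = X - η X • ξ)
    (hgφ : ∀ X Y, g (φ X) (φ Y) = g X Y - ε * (η X * η Y))
    (hSξ : ∀ Y, S ξ Y = -c * η Y)
    (hid : ∀ X Y, ε * S (φ X) Y + c * g X (φ Y) = 0) (X Y : M) :
    ε * S X Y = -c * g X Y := by
  have h := hid (φ X) Y
  rw [apply_phi_phi_left hφ2, hgφ, hSξ] at h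
  linear_combination h

end AlmostParacontact

theorem stmt_15_general {V : Type*} [AddCommGroup V] [Module ℝ V]
    (n : ℕ)
    (φ : V →ₗ[ℝ] V) (ξ : V) (η : V →ₗ[ℝ] ℝ)
    (g : V →ₗ[ℝ] V →ₗ[ℝ] ℝ) (ε : ℝ)
    (hφ2 : ∀ X : V, φ (φ X) = X - η X • ξ)
    (hε : ε = 1 ∨ ε = -1)
    (hgφ : ∀ X Y : V, g (φ X) (φ Y) = g X Y - ε * (η X * η Y))
    (Φ : V → V → ℝ) (hΦ : ∀ X Y : V, Φ X Y = g X (φ Y))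
    (S : V →ₗ[ℝ] V →ₗ[ℝ] ℝ)
    (hSsym : ∀ X Y : V, S X Y = S Y X)
    (hSξ : ∀ Y : V, S Y ξ = -((n : ℝ) - 1) * η Y)
    (hid : ∀ X Y : V, ε * S (φ X) Y + ((n : ℝ) - 1) * Φ X Y = 0) :
    ∀ X Y : V, S X Y = -ε * ((n : ℝ) - 1) * g X Y := by
  intro X Y
  have hε2 : ε * ε = 1 := by rcases hε with rfl | rfl <;> norm_num
  have key := mul_apply_eq_neg_mul_of_apply_phi hφ2 hgφ
    (fun Y => by rw [hSsym, hSξ]) (fun X Y => by rw [← hΦ]; exact hid X Y) X Y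
  linear_combination ε * key - S X Y * hε2

/-- In an `n`-dimensional `(ε)`-almost paracontact metric vector space, a symmetric
bilinear form `S` with `S(Y,ξ) = −(n−1)η(Y)` and `ε S(φX,Y) + (n−1)Φ(X,Y) = 0`
satisfies `S = −ε(n−1)g`. -/
theorem stmt_15 {V : Type*} [AddCommGroup V] [Module ℝ V] [FiniteDimensional ℝ V]
    (n : ℕ) (hn : Module.finrank ℝ V = n)
    (φ : V →ₗ[ℝ] V) (ξ : V) (η : V →ₗ[ℝ] ℝ)
    (g : V →ₗ[ℝ] V →ₗ[ℝ] ℝ) (ε : ℝ)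
    (hφ2 : ∀ X : V, φ (φ X) = X - η X • ξ)
    (hηξ : η ξ = 1)
    (hφξ : φ ξ = 0)
    (hηφ : ∀ X : V, η (φ X) = 0)
    (hgsym : ∀ X Y : V, g X Y = g Y X)
    (hgnd : ∀ X : V, (∀ Y : V, g X Y = 0) → X = 0)
    (hε : ε = 1 ∨ ε = -1)
    (hgφ : ∀ X Y : V, g (φ X) (φ Y) = g X Y - ε * (η X * η Y))
    (Φ : V → V → ℝ) (hΦ : ∀ X Y : V, Φ X Y = g X (φ Y))
    (S : V →ₗ[ℝ] V →ₗ[ℝ] ℝ)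
    (hSsym : ∀ X Y : V, S X Y = S Y X)
    (hSξ : ∀ Y : V, S Y ξ = -((n : ℝ) - 1) * η Y)
    (hid : ∀ X Y : V, ε * S (φ X) Y + ((n : ℝ) - 1) * Φ X Y = 0) :
    ∀ X Y : V, S X Y = -ε * ((n : ℝ) - 1) * g X Y :=
  stmt_15_general n φ ξ η g ε hφ2 hε hgφ Φ hΦ S hSsym hSξ hid
end

section
/- Let (φ, ξ, η, g, ε) be an (ε)-almost paracontact metric structure on an n-dimensional real vector space V. Let S be a symmetric bilinear form on V satisfying S(Y, ξ) = −(n − 1) η(Y) for all Y ∈ V, and suppose that for all X, Y ∈ V: S(−ε g(X, Y) ξ + η(Y) X, ξ) + S(Y, −η(X) ξ + X) = 0. Then S(X, Y) = −ε (n − 1) g(X, Y) for all X, Y ∈ V. -/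
/-! Expanding the semi-symmetry condition bilinearly, the two `η(X) η(Y)` terms coming from
`S(·, ξ) = −(n − 1) η` cancel, and what is left is `ε (n − 1) g(X, Y) + S(Y, X) = 0`. -/

namespace LinearMap.BilinForm

variable {R M : Type*} [CommRing R] [AddCommGroup M] [Module R M]

theorem apply_smul_add_apply_add_eq (S : LinearMap.BilinForm R M)
    {ξ : M} {η : M →ₗ[R] R} {c : R} (hSξ : ∀ Y, S Y ξ = c * η Y) (a : R) (X Y : M) :
    S (a • ξ + η Y • X) ξ + S Y (-(η X) • ξ + X) = a * c * η ξ + S Y X := by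
  simp only [map_add, map_smul, LinearMap.add_apply, LinearMap.smul_apply, smul_eq_mul, hSξ]
  ring

end LinearMap.BilinForm

theorem stmt_16_general {V : Type*} [AddCommGroup V] [Module ℝ V]
    (n : ℕ)
    (ξ : V) (η : V →ₗ[ℝ] ℝ)
    (g : V →ₗ[ℝ] V →ₗ[ℝ] ℝ) (ε : ℝ)
    (hηξ : η ξ = 1)
    (S : V →ₗ[ℝ] V →ₗ[ℝ] ℝ)
    (hSsym : ∀ X Y : V, S X Y = S Y X)
    (hSξ : ∀ Y : V, S Y ξ = -((n : ℝ) - 1) * η Y)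
    (hss : ∀ X Y : V,
      S ((-ε * g X Y) • ξ + η Y • X) ξ + S Y (-(η X) • ξ + X) = 0) :
    ∀ X Y : V, S X Y = -ε * ((n : ℝ) - 1) * g X Y := by
  intro X Y
  have h := hss X Y
  rw [LinearMap.BilinForm.apply_smul_add_apply_add_eq S hSξ, hηξ, ← hSsym] at h
  linear_combination h

/-- In an `n`-dimensional `(ε)`-almost paracontact metric vector space, a symmetric
bilinear form `S` with `S(Y,ξ) = −(n−1)η(Y)` satisfying the Ricci-semi-symmetry
condition `S(−ε g(X,Y)ξ + η(Y)X, ξ) + S(Y, −η(X)ξ + X) = 0` satisfies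
`S = −ε(n−1)g`. -/
theorem stmt_16 {V : Type*} [AddCommGroup V] [Module ℝ V] [FiniteDimensional ℝ V]
    (n : ℕ) (hn : Module.finrank ℝ V = n)
    (φ : V →ₗ[ℝ] V) (ξ : V) (η : V →ₗ[ℝ] ℝ)
    (g : V →ₗ[ℝ] V →ₗ[ℝ] ℝ) (ε : ℝ)
    (hφ2 : ∀ X : V, φ (φ X) = X - η X • ξ)
    (hηξ : η ξ = 1)
    (hφξ : φ ξ = 0)
    (hηφ : ∀ X : V, η (φ X) = 0)
    (hgsym : ∀ X Y : V, g X Y = g Y X)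
    (hgnd : ∀ X : V, (∀ Y : V, g X Y = 0) → X = 0)
    (hε : ε = 1 ∨ ε = -1)
    (hgφ : ∀ X Y : V, g (φ X) (φ Y) = g X Y - ε * (η X * η Y))
    (S : V →ₗ[ℝ] V →ₗ[ℝ] ℝ)
    (hSsym : ∀ X Y : V, S X Y = S Y X)
    (hSξ : ∀ Y : V, S Y ξ = -((n : ℝ) - 1) * η Y)
    (hss : ∀ X Y : V,
      S ((-ε * g X Y) • ξ + η Y • X) ξ + S Y (-(η X) • ξ + X) = 0) :
    ∀ X Y : V, S X Y = -ε * ((n : ℝ) - 1) * g X Y :=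
  stmt_16_general n ξ η g ε hηξ S hSsym hSξ hss
end

section
/- Let V be a real vector space, ψ : V → V a linear map, ξ ∈ V, η a linear functional on V, g a nondegenerate symmetric bilinear form on V, and ε ∈ {1, −1}, such that ψ(ψX) = −X + η(X)ξ for all X ∈ V, η(ξ) = 1, ψξ = 0, η(ψX) = 0 for all X ∈ V, and g(ψX, ψY) = g(X, Y) − ε η(X) η(Y) for all X, Y ∈ V. Define φ = ψ ∘ ψ. Then (φ, ξ, η, g, ε) is an (ε)-almost paracontact metric structure on V, i.e. φ(φX) = X − η(X)ξ for all X, η(ξ) = 1, φξ = 0, η(φX) = 0 for all X, and g(φX, φY) = g(X, Y) − ε η(X) η(Y) for all X, Y ∈ V. -/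
namespace LinearMap

variable {R M : Type*} [CommRing R] [AddCommGroup M] [Module R M]
  {ψ : M →ₗ[R] M} {ξ : M} {η : M →ₗ[R] R}

theorem comp_self_comp_self_apply (hψ2 : ∀ X, ψ (ψ X) = -X + η X • ξ)
    (hηψ : ∀ X, η (ψ X) = 0) (X : M) :
    (ψ ∘ₗ ψ) ((ψ ∘ₗ ψ) X) = X - η X • ξ := by
  simp only [comp_apply]
  rw [hψ2 (ψ (ψ X)), hηψ (ψ X), hψ2 X]
  module

theorem comp_self_apply_apply_comp_self_apply {g : M →ₗ[R] M →ₗ[R] R} {ε : R}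
    (hgψ : ∀ X Y, g (ψ X) (ψ Y) = g X Y - ε * (η X * η Y))
    (hηψ : ∀ X, η (ψ X) = 0) (X Y : M) :
    g ((ψ ∘ₗ ψ) X) ((ψ ∘ₗ ψ) Y) = g X Y - ε * (η X * η Y) := by
  simp only [comp_apply]
  rw [hgψ (ψ X) (ψ Y), hηψ, hηψ, hgψ X Y]
  ring

end LinearMap

open LinearMap in
theorem stmt_18_general {V : Type*} [AddCommGroup V] [Module ℝ V]
    (ψ : V →ₗ[ℝ] V) (ξ : V) (η : V →ₗ[ℝ] ℝ)
    (g : V →ₗ[ℝ] V →ₗ[ℝ] ℝ) (ε : ℝ)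
    (hψ2 : ∀ X : V, ψ (ψ X) = -X + η X • ξ)
    (hηξ : η ξ = 1)
    (hψξ : ψ ξ = 0)
    (hηψ : ∀ X : V, η (ψ X) = 0)
    (hgψ : ∀ X Y : V, g (ψ X) (ψ Y) = g X Y - ε * (η X * η Y))
    (φ : V →ₗ[ℝ] V) (hφ : φ = ψ ∘ₗ ψ) :
    (∀ X : V, φ (φ X) = X - η X • ξ) ∧
      η ξ = 1 ∧
      φ ξ = 0 ∧
      (∀ X : V, η (φ X) = 0) ∧
      ∀ X Y : V, g (φ X) (φ Y) = g X Y - ε * (η X * η Y) := by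
  subst hφ
  exact ⟨comp_self_comp_self_apply hψ2 hηψ, hηξ, by simp [hψξ], fun X => hηψ (ψ X),
    comp_self_apply_apply_comp_self_apply hgψ hηψ⟩

/-- If `(ψ, ξ, η, g, ε)` is an `(ε)`-almost contact metric structure on a real vector
space, then `(φ = ψ², ξ, η, g, ε)` is an `(ε)`-almost paracontact metric structure. -/
theorem stmt_18 {V : Type*} [AddCommGroup V] [Module ℝ V]
    (ψ : V →ₗ[ℝ] V) (ξ : V) (η : V →ₗ[ℝ] ℝ)
    (g : V →ₗ[ℝ] V →ₗ[ℝ] ℝ) (ε : ℝ)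
    (hψ2 : ∀ X : V, ψ (ψ X) = -X + η X • ξ)
    (hηξ : η ξ = 1)
    (hψξ : ψ ξ = 0)
    (hηψ : ∀ X : V, η (ψ X) = 0)
    (hgsym : ∀ X Y : V, g X Y = g Y X)
    (hgnd : ∀ X : V, (∀ Y : V, g X Y = 0) → X = 0)
    (hε : ε = 1 ∨ ε = -1)
    (hgψ : ∀ X Y : V, g (ψ X) (ψ Y) = g X Y - ε * (η X * η Y))
    (φ : V →ₗ[ℝ] V) (hφ : φ = ψ ∘ₗ ψ) :
    (∀ X : V, φ (φ X) = X - η X • ξ) ∧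
      η ξ = 1 ∧
      φ ξ = 0 ∧
      (∀ X : V, η (φ X) = 0) ∧
      ∀ X Y : V, g (φ X) (φ Y) = g X Y - ε * (η X * η Y) :=
  stmt_18_general ψ ξ η g ε hψ2 hηξ hψξ hηψ hgψ φ hφ
end
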